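/- Let d, e ≥ 0 be real numbers whose sum f = d + e has non-terminating decimal expansion. For n ∈ ℤ, let l be the least nonnegative integer such that d_{n−l−1} + e_{n−l−1} ≠ 9 (such l exists), where d_m, e_m denote the digits at 10^m in the canonical expansions. Then the digit f_n of f at 10^n equals d_n + e_n mod 10 if d_{n−l−1} + e_{n−l−1} < 9, and equals d_n + e_n + 1 mod 10 if d_{n−l−1} + e_{n−l−1} > 9. -/
import Mathlib


/-- The digit at `10^n` in the canonical decimal expansion of a nonnegative
real number `x`: `⌊x·10^{−n}⌋ mod 10`. -/
noncomputable def digit (x : ℝ) (n : ℤ) : ℤ := ⌊x * 10 ^ (-n)⌋ % 10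

/-- A real is non-terminating if its decimal digits are not eventually `0`. -/
def NonTerminating (x : ℝ) : Prop := ∀ N : ℤ, ∃ m : ℤ, m ≤ N ∧ digit x m ≠ 0

/-- Auxiliary: the floor of `x·10^{-m}`. -/
noncomputable def Fl (x : ℝ) (m : ℤ) : ℤ := ⌊x * 10 ^ (-m)⌋

/-- Auxiliary: carry into position `m` when adding `d` and `e`. -/
noncomputable def carry (d e : ℝ) (m : ℤ) : ℤ := Fl (d + e) m - Fl d m - Fl e m

lemma floor_div_ten (y : ℝ) : ⌊y / 10⌋ = ⌊y⌋ / 10 := by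
  have h1 : (⌊y⌋ : ℝ) ≤ y := Int.floor_le y
  have h2 : y < ⌊y⌋ + 1 := Int.lt_floor_add_one y
  have hq : ⌊y⌋ = 10 * (⌊y⌋ / 10) + ⌊y⌋ % 10 := (Int.mul_ediv_add_emod _ _).symm
  have hr0 : 0 ≤ ⌊y⌋ % 10 := Int.emod_nonneg _ (by norm_num)
  have hr1 : ⌊y⌋ % 10 < 10 := Int.emod_lt_of_pos _ (by norm_num)
  set q : ℤ := ⌊y⌋ / 10 with hqdef
  have key1 : (10 : ℤ) * q ≤ ⌊y⌋ := by omega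
  have key2 : ⌊y⌋ < 10 * q + 10 := by omega
  have k1 : (10 : ℝ) * q ≤ ⌊y⌋ := by exact_mod_cast key1
  have key2' : ⌊y⌋ + 1 ≤ 10 * q + 10 := by omega
  have k2 : (⌊y⌋ : ℝ) + 1 ≤ 10 * q + 10 := by exact_mod_cast key2'
  rw [Int.floor_eq_iff]
  constructor
  · rw [le_div_iff₀ (by norm_num : (0:ℝ) < 10)]
    linarith
  · push_cast
    rw [div_lt_iff₀ (by norm_num : (0:ℝ) < 10)]
    linarith

lemma Fl_succ (x : ℝ) (m : ℤ) : Fl x (m + 1) = Fl x m / 10 := by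
  have h : x * 10 ^ (-(m + 1)) = x * 10 ^ (-m) / 10 := by
    rw [show -(m+1) = -m + (-1) by ring, zpow_add₀ (by norm_num : (10:ℝ) ≠ 0)]
    simp [zpow_neg_one]
    ring
  rw [Fl, Fl, h, floor_div_ten]

lemma Fl_eq (x : ℝ) (m : ℤ) : Fl x m = 10 * Fl x (m + 1) + digit x m := by
  rw [Fl_succ]
  exact (Int.mul_ediv_add_emod _ _).symm

lemma carry_mem (d e : ℝ) (m : ℤ) : 0 ≤ carry d e m ∧ carry d e m ≤ 1 := by
  have key : (carry d e m : ℝ) =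
      Int.fract (d * 10 ^ (-m)) + Int.fract (e * 10 ^ (-m))
        - Int.fract ((d + e) * 10 ^ (-m)) := by
    have : (d + e) * 10 ^ (-m) = d * 10 ^ (-m) + e * 10 ^ (-m) := by ring
    simp only [carry, Fl, Int.fract, this]
    push_cast
    ring
  have f1 := Int.fract_nonneg (d * 10 ^ (-m))
  have f2 := Int.fract_nonneg (e * 10 ^ (-m))
  have f3 := Int.fract_nonneg ((d + e) * 10 ^ (-m))
  have g1 := Int.fract_lt_one (d * 10 ^ (-m))
  have g2 := Int.fract_lt_one (e * 10 ^ (-m))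
  have g3 := Int.fract_lt_one ((d + e) * 10 ^ (-m))
  have ha : (-1 : ℤ) < carry d e m := by
    have : (-1 : ℝ) < (carry d e m : ℝ) := by rw [key]; linarith
    exact_mod_cast this
  have hb : carry d e m < 2 := by
    have : (carry d e m : ℝ) < 2 := by rw [key]; linarith
    exact_mod_cast this
  omega

lemma digit_mem (x : ℝ) (m : ℤ) : 0 ≤ digit x m ∧ digit x m < 10 :=
  ⟨Int.emod_nonneg _ (by norm_num), Int.emod_lt_of_pos _ (by norm_num)⟩

lemma carry_rec (d e : ℝ) (m : ℤ) :
    carry d e m = 10 * carry d e (m + 1) + digit (d + e) m - digit d m - digit e m := by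
  have h1 := Fl_eq (d + e) m
  have h2 := Fl_eq d m
  have h3 := Fl_eq e m
  simp only [carry]
  omega

/-- Digit-wise addition rule: if `d, e ≥ 0`, `f = d + e` is non-terminating and
`l` is the least nonnegative integer with `d_{n−l−1} + e_{n−l−1} ≠ 9`, then
`f_n = d_n + e_n mod 10` if that sum is `< 9`, and `f_n = d_n + e_n + 1 mod 10`
if it is `> 9`. -/
theorem addition_digit_rule (d e : ℝ) (hd : 0 ≤ d) (he : 0 ≤ e)
    (hf : NonTerminating (d + e)) (n : ℤ) (l : ℕ)
    (hlt : ∀ i : ℕ, i < l → digit d (n - i - 1) + digit e (n - i - 1) = 9)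
    (hne : digit d (n - l - 1) + digit e (n - l - 1) ≠ 9) :
    (digit d (n - l - 1) + digit e (n - l - 1) < 9 →
      digit (d + e) n = (digit d n + digit e n) % 10) ∧
    (digit d (n - l - 1) + digit e (n - l - 1) > 9 →
      digit (d + e) n = (digit d n + digit e n + 1) % 10) := by
  -- carry propagates through the run of 9s
  have prop : ∀ j : ℕ, j ≤ l → carry d e n = carry d e (n - j) := by
    intro j hj
    induction j with
    | zero => simp
    | succ k ih =>
      have hk : k ≤ l := Nat.le_of_succ_le hj
      have h9 := hlt k (Nat.lt_of_succ_le hj)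
      have hrec := carry_rec d e (n - k - 1)
      have hc1 := carry_mem d e (n - k - 1)
      have hc2 := carry_mem d e (n - k - 1 + 1)
      have hdig := digit_mem (d + e) (n - k - 1)
      have hd1 := digit_mem d (n - k - 1)
      have hd2 := digit_mem e (n - k - 1)
      have heq0 : carry d e (n - k - 1 + 1) = carry d e (n - k - 1) := by omega
      have heq : carry d e (n - k) = carry d e (n - k - 1) :=
        (congrArg (carry d e) (by ring : n - (k : ℤ) = n - k - 1 + 1)).trans heq0
      have hcast : n - (k + 1 : ℕ) = n - k - 1 := by push_cast; ring
      rw [hcast, ← heq, ← ih hk]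
  have hbase := prop l le_rfl
  -- determine carry at n from the digits at n - l - 1
  have hrec := carry_rec d e (n - l - 1)
  have hc1 := carry_mem d e (n - l - 1)
  have hc2 := carry_mem d e (n - l - 1 + 1)
  have hdig := digit_mem (d + e) (n - l - 1)
  have hd1 := digit_mem d (n - l - 1)
  have hd2 := digit_mem e (n - l - 1)
  have hstep : n - l - 1 + 1 = n - (l : ℤ) := by ring
  rw [hstep] at hc2 hrec
  -- final digit equation at n
  have hfin := carry_rec d e n
  have hcn1 := carry_mem d e (n + 1)
  have hdn := digit_mem (d + e) n
  have hdn1 := digit_mem d n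
  have hdn2 := digit_mem e n
  constructor
  · intro hlt9
    omega
  · intro hgt9
    omega
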